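/- Let ℬ be an 𝒜-graded integer matrix (via φ) such that there is a finite PFI Markov basis 𝒢 connecting every finite intersection ∩_{i=1}^{r} φ(F(ℬ, bᵢ)) for all r ∈ ℕ and bᵢ ∈ ℕℬ. Then there exists a constant C > 0 such that the Markov degree of the r-fold toric fiber power ×_𝒜^r ℬ is at most C for every r > 0. -/

import Mathlib

/-!
A table of the fiber power lives on the cells `f = (f 1, …, f r)` of columns of `ℬ` of a common
`𝒜`-degree; its fiber is fixed by the `r` factor margins `π_k w`, all of which push forward under
`φ` to the same level. Two kinds of moves of degree independent of `r` suffice.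

Tables with equal factor margins are connected by degree-`2` swaps exchanging one factor between
two cells. To change the factor margins by vectors `m k ∈ ker ℬ` of common level `g`, first
pad the negative parts of the `m k` to one level `p ≤ min (level w) D` and couple them into a
subtable of `w` (after swaps); replacing it by a coupling of the padded margins shifted by
`m k` is a single move of degree `≤ t D + ‖g‖₁`.

By Gordan–Dickson the conformally minimal nonzero `m ∈ ker ℬ` with `φ_* m = g` are bounded in
size, uniformly for the finitely many `g ∈ {0} ∪ ±𝒢`; this fixes `D`. Two tables of a fiber are
then joined by following a `𝒢`-path between their levels, which exists by hypothesis, and at each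
step subtracting conformal pieces from the factor-margin differences.
-/

namespace Stmt18

/-- Marginalization map induced by `φ : [n] → [t]`. -/
def marg {n t : ℕ} (φ : Fin n → Fin t) (v : Fin n → ℤ) : Fin t → ℤ :=
  fun a => ∑ i, if φ i = a then v i else 0

def mstep {ι : Type*} (F M : Set (ι → ℤ)) (u v : ι → ℤ) : Prop :=
  u ∈ F ∧ v ∈ F ∧ (v - u ∈ M ∨ u - v ∈ M)

def connects {ι : Type*} (M F : Set (ι → ℤ)) : Prop :=
  ∀ u ∈ F, ∀ v ∈ F, Relation.ReflTransGen (mstep F M) u v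

def pos {ι : Type*} (v : ι → ℤ) : ι → ℤ := fun i => max (v i) 0
def neg {ι : Type*} (v : ι → ℤ) : ι → ℤ := fun i => max (-v i) 0

/-- `deg(v) = max(‖v⁺‖₁, ‖v⁻‖₁)`. -/
def deg {ι : Type*} [Fintype ι] (v : ι → ℤ) : ℤ :=
  max (∑ i, pos v i) (∑ i, neg v i)

/-- Index set of the `r`-fold toric fiber power `×_𝒜^r ℬ`. -/
abbrev powIdx (r n t : ℕ) (φ : Fin n → Fin t) :=
  {f : Fin r → Fin n // ∃ a : Fin t, ∀ k, φ (f k) = a}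

/-- The matrix of the `r`-fold toric fiber power `×_𝒜^r ℬ`: its column indexed by
`f` is `(b_{f 1}; …; b_{f r})`. -/
def powMat {h n t : ℕ} (B : Matrix (Fin h) (Fin n) ℤ) (φ : Fin n → Fin t) (r : ℕ) :
    Matrix (Fin r × Fin h) (powIdx r n t φ) ℤ :=
  Matrix.of fun k f => B k.2 (f.1 k.1)

section Vectors
variable {ι : Type*}

def l1 [Fintype ι] (v : ι → ℤ) : ℤ := ∑ i, |v i|

lemma l1_nonneg [Fintype ι] (v : ι → ℤ) : 0 ≤ l1 v :=
  Finset.sum_nonneg fun i _ => abs_nonneg (v i)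

lemma l1_pos [Fintype ι] {v : ι → ℤ} (hv : v ≠ 0) : 0 < l1 v := by
  obtain ⟨i, hi⟩ := Function.ne_iff.1 hv
  exact Finset.sum_pos' (fun j _ => abs_nonneg (v j)) ⟨i, Finset.mem_univ i, abs_pos.2 hi⟩

lemma eq_zero_of_sum_nonpos [Fintype ι] {q : ι → ℤ} (hq : 0 ≤ q) (h : ∑ i, q i ≤ 0) : q = 0 :=
  funext fun i => (Finset.sum_eq_zero_iff_of_nonneg fun j _ => hq j).1
    (le_antisymm h (Finset.sum_nonneg fun j _ => hq j)) i (Finset.mem_univ i)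

lemma exists_pos_of_sum_pos [Fintype ι] {q : ι → ℤ} (h : 0 < ∑ i, q i) : ∃ i, 0 < q i := by
  by_contra! hc
  exact h.not_ge (Finset.sum_nonpos fun i _ => hc i)

lemma sum_sub_single [Fintype ι] [DecidableEq ι] (q : ι → ℤ) (i : ι) :
    ∑ j, (q - Pi.single i 1 : ι → ℤ) j = ∑ j, q j - 1 := by
  simp [Finset.sum_sub_distrib]

lemma sub_single_nonneg [DecidableEq ι] {q : ι → ℤ} (hq : 0 ≤ q) {i : ι} (hi : 0 < q i) :
    0 ≤ q - Pi.single i 1 := fun j => by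
  rcases eq_or_ne j i with rfl | hj
  · simpa using Int.add_one_le_iff.2 hi
  · simpa [hj] using hq j

lemma single_one_nonneg [DecidableEq ι] (i : ι) : 0 ≤ (Pi.single i 1 : ι → ℤ) :=
  Pi.single_nonneg.2 zero_le_one

/-- The conformal order `u ⊑ v`. -/
def ConformalLE (u v : ι → ℤ) : Prop :=
  ∀ i, (0 ≤ u i ∧ u i ≤ v i) ∨ (v i ≤ u i ∧ u i ≤ 0)

namespace ConformalLE

lemma l1_sub [Fintype ι] {u v : ι → ℤ} (h : ConformalLE u v) : l1 (v - u) = l1 v - l1 u := by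
  rw [l1, l1, l1, ← Finset.sum_sub_distrib]
  refine Finset.sum_congr rfl fun i _ => ?_
  rcases h i with ⟨h1, h2⟩ | ⟨h1, h2⟩
  · rw [Pi.sub_apply, abs_of_nonneg (by omega), abs_of_nonneg (by omega), abs_of_nonneg h1]
  · rw [Pi.sub_apply, abs_of_nonpos (by omega), abs_of_nonpos (by omega), abs_of_nonpos h2]
    ring

lemma add_nonneg {u v x : ι → ℤ} (h : ConformalLE u v) (hx : 0 ≤ x) (hxv : 0 ≤ x + v) :
    0 ≤ x + u := fun i => by
  have h1 := hx i
  have h2 := hxv i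
  simp only [Pi.zero_apply, Pi.add_apply] at h1 h2 ⊢
  rcases h i with ⟨_, _⟩ | ⟨_, _⟩ <;> omega

end ConformalLE

/-- Records the positive and negative part of each coordinate; it turns `⊑` into the
product order on `ι → ℕ × ℕ`, which is a well-quasi-order by Dickson's lemma. -/
def signParts (v : ι → ℤ) : ι → ℕ × ℕ := fun i => ((v i).toNat, (-v i).toNat)

lemma signParts_injective : Function.Injective (signParts (ι := ι)) := fun u v h => by
  funext i
  have := congrFun h i
  simp only [signParts, Prod.mk.injEq] at this
  omega

lemma conformalLE_of_signParts_le {u v : ι → ℤ} (h : signParts u ≤ signParts v) :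
    ConformalLE u v := fun i => by
  have := h i
  simp only [signParts, Prod.mk_le_mk] at this
  omega

/-- Gordan–Dickson: a set of integer vectors has only finitely many `⊑`-minimal elements. -/
lemma exists_conformalLE_l1_le [Fintype ι] (K : Set (ι → ℤ)) :
    ∃ D, ∀ d ∈ K, ∃ m ∈ K, ConformalLE m d ∧ l1 m ≤ D := by
  set S := signParts '' K
  set Kmin := {m ∈ K | Minimal (· ∈ S) (signParts m)}
  have hfin : Kmin.Finite := by
    refine Set.Finite.of_finite_image ?_ signParts_injective.injOn
    refine (IsAntichain.finite_of_partiallyWellOrderedOn (setOfPred_minimal_antichain (· ∈ S))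
      (Set.isPWO_of_wellQuasiOrderedLE _)).subset ?_
    rintro _ ⟨m, hm, rfl⟩
    exact hm.2
  obtain ⟨D, hD⟩ := (hfin.image l1).bddAbove
  refine ⟨D, fun d hd => ?_⟩
  obtain ⟨_, hle, hmin⟩ :=
    (Set.isPWO_of_wellQuasiOrderedLE S).exists_le_minimal (Set.mem_image_of_mem _ hd)
  obtain ⟨m, hm, rfl⟩ := hmin.prop
  exact ⟨m, hm, conformalLE_of_signParts_le hle, hD ⟨m, ⟨hm, hmin⟩, rfl⟩⟩

end Vectors

section Degree
variable {ι : Type*}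

lemma neg_nonneg (v : ι → ℤ) : 0 ≤ neg v := fun _ => le_max_right _ _

lemma neg_le_iff {u v : ι → ℤ} : neg v ≤ u ↔ 0 ≤ u ∧ 0 ≤ u + v := by
  simp only [Pi.le_def, Pi.zero_apply, Pi.add_apply, neg, max_le_iff, ← forall_and]
  exact forall_congr' fun i => by omega

lemma sum_neg_le_l1 [Fintype ι] (v : ι → ℤ) : ∑ i, neg v i ≤ l1 v :=
  Finset.sum_le_sum fun _ _ => max_le (neg_le_abs _) (abs_nonneg _)

lemma deg_sub_le [Fintype ι] {P Q : ι → ℤ} (hP : 0 ≤ P) (hQ : 0 ≤ Q) :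
    deg (P - Q) ≤ max (∑ i, P i) (∑ i, Q i) := by
  refine max_le_max (Finset.sum_le_sum fun i _ => ?_) (Finset.sum_le_sum fun i _ => ?_) <;>
  · have h1 := hP i
    have h2 := hQ i
    simp only [Pi.zero_apply] at h1 h2
    simp only [pos, neg, Pi.sub_apply]
    omega

end Degree

section Pushforward
variable {α β γ : Type*} [Fintype α] [DecidableEq β]

def pushforward (p : α → β) (v : α → ℤ) : β → ℤ :=
  fun b => ∑ a, if p a = b then v a else 0

variable (p : α → β)

lemma marg_eq_pushforward {n t : ℕ} (φ : Fin n → Fin t) : marg φ = pushforward φ := rfl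

lemma pushforward_add (u v : α → ℤ) :
    pushforward p (u + v) = pushforward p u + pushforward p v := by
  funext b
  simp only [pushforward, Pi.add_apply, ← Finset.sum_add_distrib, ← ite_add_zero]

lemma pushforward_sub (u v : α → ℤ) :
    pushforward p (u - v) = pushforward p u - pushforward p v := by
  funext b
  simp only [pushforward, Pi.sub_apply, ← Finset.sum_sub_distrib]
  exact Finset.sum_congr rfl fun a _ => by split_ifs <;> simp

@[simp]
lemma pushforward_zero : pushforward p (0 : α → ℤ) = 0 := by
  funext b
  simp [pushforward]

lemma pushforward_single [DecidableEq α] (a : α) (c : ℤ) :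
    pushforward p (Pi.single a c) = Pi.single (p a) c := by
  funext b
  rw [pushforward, Finset.sum_eq_single a (fun x _ hx => by simp [hx]) (by simp)]
  simp [Pi.single_apply, eq_comm]

lemma pushforward_mono {u v : α → ℤ} (h : u ≤ v) : pushforward p u ≤ pushforward p v :=
  fun b => Finset.sum_le_sum fun a _ => by split_ifs <;> simp [h a]

lemma pushforward_nonneg {v : α → ℤ} (hv : 0 ≤ v) : 0 ≤ pushforward p v := by
  simpa using pushforward_mono p hv

lemma sum_pushforward [Fintype β] (v : α → ℤ) : ∑ b, pushforward p v b = ∑ a, v a := by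
  simp only [pushforward]
  rw [Finset.sum_comm]
  exact Finset.sum_congr rfl fun a _ => by simp

lemma pushforward_pushforward [Fintype β] [DecidableEq γ] (q : β → γ) (v : α → ℤ) :
    pushforward q (pushforward p v) = pushforward (q ∘ p) v := by
  funext c
  simp only [pushforward, ← Finset.sum_filter]
  rw [Finset.sum_comm' (t' := Finset.univ.filter fun a => q (p a) = c) (s' := fun a => {p a})]
  · simp
  · intro b a
    simp only [Finset.mem_filter, Finset.mem_univ, true_and, Finset.mem_singleton]
    grind

lemma apply_le_pushforward {v : α → ℤ} (hv : 0 ≤ v) (a : α) : v a ≤ pushforward p v (p a) := by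
  have := Finset.single_le_sum (f := fun a' => if p a' = p a then v a' else 0)
    (fun a' _ => by split_ifs; exacts [hv a', le_rfl]) (Finset.mem_univ a)
  simpa [pushforward] using this

lemma pushforward_le_sum {v : α → ℤ} (hv : 0 ≤ v) (b : β) : pushforward p v b ≤ ∑ a, v a :=
  Finset.sum_le_sum fun a _ => by split_ifs; exacts [le_rfl, hv a]

lemma exists_pos_of_pushforward_pos {v : α → ℤ} {b : β} (h : 0 < pushforward p v b) :
    ∃ a, p a = b ∧ 0 < v a := by
  by_contra! hc
  exact h.not_ge (Finset.sum_nonpos fun a _ => by split_ifs with hab; exacts [hc a hab, le_rfl])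

lemma exists_le_pushforward_eq [DecidableEq α] [Fintype β] {v : α → ℤ} (hv : 0 ≤ v)
    {q : β → ℤ} (hq : 0 ≤ q) (hqv : q ≤ pushforward p v) :
    ∃ z, 0 ≤ z ∧ z ≤ v ∧ pushforward p z = q := by
  obtain ⟨N, hN⟩ : ∃ N, (∑ b, q b).toNat = N := ⟨_, rfl⟩
  induction N generalizing v q with
  | zero =>
    obtain rfl := eq_zero_of_sum_nonpos hq (by omega)
    exact ⟨0, le_rfl, hv, pushforward_zero p⟩
  | succ N ih =>
    obtain ⟨b, hb⟩ := exists_pos_of_sum_pos (q := q) (by omega)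
    obtain ⟨a, rfl, ha⟩ := exists_pos_of_pushforward_pos p (hb.trans_le (hqv b))
    have hqv' : q - Pi.single (p a) 1 ≤ pushforward p (v - Pi.single a 1) := by
      rw [pushforward_sub, pushforward_single]
      exact sub_le_sub_right hqv _
    obtain ⟨z, hz, hzv, hzq⟩ := ih (sub_single_nonneg hv ha) (sub_single_nonneg hq hb) hqv'
      (by rw [sum_sub_single]; omega)
    refine ⟨z + Pi.single a 1, add_nonneg hz (single_one_nonneg a), le_sub_iff_add_le.1 hzv, ?_⟩
    rw [pushforward_add, hzq, pushforward_single, sub_add_cancel]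

lemma exists_between_pushforward_eq [DecidableEq α] [Fintype β] {x u : α → ℤ} (hxu : x ≤ u)
    {q : β → ℤ} (hxq : pushforward p x ≤ q) (hqu : q ≤ pushforward p u) :
    ∃ y, x ≤ y ∧ y ≤ u ∧ pushforward p y = q := by
  obtain ⟨z, hz, hzu, hzq⟩ := exists_le_pushforward_eq p (sub_nonneg.2 hxu) (sub_nonneg.2 hxq)
    (by rw [pushforward_sub]; exact sub_le_sub_right hqu _)
  refine ⟨x + z, le_add_of_nonneg_right hz, ?_, ?_⟩
  · simpa only [le_sub_iff_add_le'] using hzu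
  · rw [pushforward_add, hzq, add_sub_cancel]

end Pushforward

section Tables
variable {r n t : ℕ} {φ : Fin n → Fin t}

def cellProj (k : Fin r) (f : powIdx r n t φ) : Fin n := f.1 k

@[simp]
lemma cellProj_apply (k : Fin r) (f : powIdx r n t φ) : cellProj k f = f.1 k := rfl

/-- The common value of `φ` on the factors of a cell (arbitrary when `r = 0`). -/
noncomputable def grade (f : powIdx r n t φ) : Fin t := f.2.choose

lemma grade_spec (f : powIdx r n t φ) (k : Fin r) : φ (f.1 k) = grade f :=
  f.2.choose_spec k

/-- The `𝒜`-degree of a table, i.e. the common `φ`-pushforward of its factor margins. -/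
noncomputable def level (w : powIdx r n t φ → ℤ) : Fin t → ℤ := pushforward grade w

lemma pushforward_pushforward_cellProj (w : powIdx r n t φ → ℤ) (k : Fin r) :
    pushforward φ (pushforward (cellProj k) w) = level w := by
  rw [pushforward_pushforward, level]
  congr 1
  exact funext fun f => grade_spec f k

lemma sum_eq_sum_level (w : powIdx r n t φ → ℤ) : ∑ f, w f = ∑ a, level w a :=
  (sum_pushforward grade w).symm

lemma exists_coupling (hr : 0 < r) {ρ : Fin r → Fin n → ℤ} (hρ : ∀ k, 0 ≤ ρ k) {q : Fin t → ℤ}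
    (hq : ∀ k, pushforward φ (ρ k) = q) :
    ∃ W : powIdx r n t φ → ℤ, 0 ≤ W ∧ ∀ k, pushforward (cellProj k) W = ρ k := by
  have hq0 : 0 ≤ q := hq ⟨0, hr⟩ ▸ pushforward_nonneg φ (hρ _)
  obtain ⟨N, hN⟩ : ∃ N, (∑ a, q a).toNat = N := ⟨_, rfl⟩
  induction N generalizing ρ q with
  | zero =>
    obtain rfl := eq_zero_of_sum_nonpos hq0 (by omega)
    refine ⟨0, le_rfl, fun k => ?_⟩
    refine (eq_zero_of_sum_nonpos (hρ k) ?_).symm ▸ pushforward_zero _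
    rw [← sum_pushforward φ, hq k]
    simp
  | succ N ih =>
    obtain ⟨a, ha⟩ := exists_pos_of_sum_pos (q := q) (by omega)
    have hcell : ∀ k, ∃ i, φ i = a ∧ 0 < ρ k i := fun k =>
      exists_pos_of_pushforward_pos φ ((hq k).symm ▸ ha)
    choose cell hcell hpos using hcell
    obtain ⟨W, hW, hWρ⟩ := ih (ρ := fun k => ρ k - Pi.single (cell k) 1) (q := q - Pi.single a 1)
      (fun k => sub_single_nonneg (hρ k) (hpos k))
      (fun k => by rw [pushforward_sub, pushforward_single, hq k, hcell k])
      (sub_single_nonneg hq0 ha) (by rw [sum_sub_single]; omega)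
    refine ⟨W + Pi.single ⟨cell, a, hcell⟩ 1, add_nonneg hW (single_one_nonneg _), fun k => ?_⟩
    rw [pushforward_add, hWρ k, pushforward_single]
    exact sub_add_cancel _ _

end Tables

section PowMat
variable {h n t r : ℕ} {B : Matrix (Fin h) (Fin n) ℤ} {φ : Fin n → Fin t}

lemma powMat_mulVec (w : powIdx r n t φ → ℤ) (k : Fin r) (j : Fin h) :
    (powMat B φ r).mulVec w (k, j) = B.mulVec (pushforward (cellProj k) w) j := by
  simp only [Matrix.mulVec, dotProduct, powMat, Matrix.of_apply, pushforward, Finset.mul_sum,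
    mul_ite, mul_zero]
  rw [Finset.sum_comm]
  exact Finset.sum_congr rfl fun f _ => by rw [Finset.sum_ite_eq]; simp

lemma powMat_mulVec_eq_iff {c : Fin r × Fin h → ℤ} {w : powIdx r n t φ → ℤ} :
    (powMat B φ r).mulVec w = c ↔
      ∀ k, B.mulVec (pushforward (cellProj k) w) = fun j => c (k, j) := by
  simp only [funext_iff, Prod.forall, powMat_mulVec]

end PowMat

section Paths
variable {ι : Type*} {F F' M M' : Set (ι → ℤ)}

instance : Std.Symm (mstep F M) := ⟨fun _ _ h => ⟨h.2.1, h.1, h.2.2.symm⟩⟩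

lemma mstep_mono (hF : F ⊆ F') (hM : M ⊆ M') : mstep F M ≤ mstep F' M' :=
  fun _ _ h => ⟨hF h.1, hF h.2.1, h.2.2.imp (@hM _) (@hM _)⟩

lemma reflTransGen_mstep_add (x : ι → ℤ) (hF : ∀ y ∈ F, y + x ∈ F') {u v : ι → ℤ}
    (h : Relation.ReflTransGen (mstep F M) u v) :
    Relation.ReflTransGen (mstep F' M) (u + x) (v + x) := by
  refine Relation.ReflTransGen.lift (· + x) (fun a b hab => ⟨hF a hab.1, hF b hab.2.1, ?_⟩) u v h
  simpa only [add_sub_add_right_eq_sub] using hab.2.2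

lemma mem_of_reflTransGen_mstep {u v : ι → ℤ} (h : Relation.ReflTransGen (mstep F M) u v)
    (hu : u ∈ F) : v ∈ F := by
  induction h with
  | refl => exact hu
  | tail _ hstep _ => exact hstep.2.1

end Paths

section Swap
variable {r n t : ℕ} {φ : Fin n → Fin t}

variable (φ) in
def marginFiber (u : Fin r → Fin n → ℤ) : Set (powIdx r n t φ → ℤ) :=
  {w | 0 ≤ w ∧ ∀ k, pushforward (cellProj k) w = u k}

lemma sum_eq_of_mem_marginFiber (hr : 0 < r) {u : Fin r → Fin n → ℤ}
    {w w' : powIdx r n t φ → ℤ} (hw : w ∈ marginFiber φ u) (hw' : w' ∈ marginFiber φ u) :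
    ∑ f, w f = ∑ f, w' f := by
  rw [← sum_pushforward (cellProj ⟨0, hr⟩), ← sum_pushforward (cellProj ⟨0, hr⟩), hw.2, hw'.2]

def swapMoves : Set (powIdx r n t φ → ℤ) :=
  {v | (∀ k, pushforward (cellProj k) v = 0) ∧ deg v ≤ 2}

lemma sub_single_mem_marginFiber {u : Fin r → Fin n → ℤ} {w : powIdx r n t φ → ℤ}
    (hw : w ∈ marginFiber φ u) {f : powIdx r n t φ} (hf : 0 < w f) :
    w - Pi.single f 1 ∈ marginFiber φ (fun k => u k - Pi.single (cellProj k f) 1) :=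
  ⟨sub_single_nonneg hw.1 hf, fun k => by rw [pushforward_sub, pushforward_single, hw.2 k]⟩

lemma add_single_mem_marginFiber {u : Fin r → Fin n → ℤ} {w : powIdx r n t φ → ℤ}
    {f : powIdx r n t φ} (hw : w ∈ marginFiber φ (fun k => u k - Pi.single (cellProj k f) 1)) :
    w + Pi.single f 1 ∈ marginFiber φ u :=
  ⟨add_nonneg hw.1 (single_one_nonneg f), fun k => by
    rw [pushforward_add, pushforward_single, hw.2 k, sub_add_cancel]⟩

def swapCell (k : Fin r) (g e : powIdx r n t φ) (h : grade e = grade g) : powIdx r n t φ :=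
  ⟨Function.update g.1 k (e.1 k), grade g, fun j => by
    rcases eq_or_ne j k with rfl | hj
    · rw [Function.update_self, ← h]
      exact grade_spec e j
    · rw [Function.update_of_ne hj]
      exact grade_spec g j⟩

@[simp]
lemma swapCell_val (k : Fin r) (g e : powIdx r n t φ) (h : grade e = grade g) :
    (swapCell k g e h).1 = Function.update g.1 k (e.1 k) := rfl

lemma swapMove_mem_swapMoves (k : Fin r) {g e : powIdx r n t φ} (h : grade e = grade g) :
    (Pi.single (swapCell k g e h) 1 + Pi.single (swapCell k e g h.symm) 1) -
      (Pi.single g 1 + Pi.single e 1) ∈ swapMoves := by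
  refine ⟨fun j => ?_, ?_⟩
  · simp only [pushforward_sub, pushforward_add, pushforward_single, cellProj_apply,
      swapCell_val]
    rcases eq_or_ne j k with rfl | hj
    · simp only [Function.update_self]
      abel
    · simp only [Function.update_of_ne hj]
      abel
  · refine (deg_sub_le (add_nonneg (single_one_nonneg _) (single_one_nonneg _))
      (add_nonneg (single_one_nonneg _) (single_one_nonneg _))).trans ?_
    simp [Finset.sum_add_distrib]

lemma exists_swap_step {u : Fin r → Fin n → ℤ} {w : powIdx r n t φ → ℤ}
    (hw : w ∈ marginFiber φ u) {g e : powIdx r n t φ} (hge : g ≠ e) (hg : 0 < w g) (he : 0 < w e)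
    (k : Fin r) (h : grade e = grade g) :
    ∃ w', mstep (marginFiber φ u) swapMoves w w' ∧ 0 < w' (swapCell k g e h) := by
  set R := w - Pi.single g 1 - Pi.single e 1
  have hR : 0 ≤ R := sub_single_nonneg (sub_single_nonneg hw.1 hg) (by simpa [hge.symm] using he)
  set w' := R + (Pi.single (swapCell k g e h) 1 + Pi.single (swapCell k e g h.symm) 1)
  have hmove := swapMove_mem_swapMoves k h
  have hsub : w' - w = (Pi.single (swapCell k g e h) 1 + Pi.single (swapCell k e g h.symm) 1) -
      (Pi.single g 1 + Pi.single e 1) := by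
    simp only [w', R]
    abel
  refine ⟨w', ⟨hw, ⟨?_, fun j => ?_⟩, Or.inl (hsub ▸ hmove)⟩, ?_⟩
  · exact add_nonneg hR (add_nonneg (single_one_nonneg _) (single_one_nonneg _))
  · rw [← hw.2 j, ← sub_eq_zero, ← pushforward_sub, hsub]
    exact hmove.1 j
  · have := hR (swapCell k g e h)
    have := single_one_nonneg (swapCell k e g h.symm) (swapCell k g e h)
    simp only [w', Pi.add_apply, Pi.single_eq_same, Pi.zero_apply] at *
    omega

/-- Swapping factors with cells of positive weight moves weight onto `f₀`, one factor of
`f₀` at a time. -/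
lemma exists_reflTransGen_swapMoves_pos {u : Fin r → Fin n → ℤ} {f₀ : powIdx r n t φ}
    (hu : ∀ k, 0 < u k (f₀.1 k)) {w : powIdx r n t φ → ℤ} (hw : w ∈ marginFiber φ u)
    {g : powIdx r n t φ} (hg : 0 < w g) (hgr : grade g = grade f₀) :
    ∃ w', Relation.ReflTransGen (mstep (marginFiber φ u) swapMoves) w w' ∧ 0 < w' f₀ := by
  obtain ⟨d, hd⟩ : ∃ d, (Finset.univ.filter fun k => g.1 k ≠ f₀.1 k).card = d :=
    ⟨_, rfl⟩
  induction d generalizing w g with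
  | zero =>
    obtain rfl : g = f₀ := Subtype.ext <| funext fun k => by
      simpa using Finset.filter_eq_empty_iff.1 (Finset.card_eq_zero.1 hd) (Finset.mem_univ k)
    exact ⟨w, .refl, hg⟩
  | succ d ih =>
    obtain ⟨k, hk⟩ : ∃ k, k ∈ Finset.univ.filter fun k => g.1 k ≠ f₀.1 k :=
      Finset.card_pos.1 (by omega)
    obtain ⟨e, he, hwe⟩ : ∃ e, e.1 k = f₀.1 k ∧ 0 < w e :=
      exists_pos_of_pushforward_pos (cellProj k) ((hw.2 k).symm ▸ hu k)
    have hegr : grade e = grade g := by rw [hgr, ← grade_spec e k, he, grade_spec f₀ k]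
    have hge : g ≠ e := fun hge => (Finset.mem_filter.1 hk).2 (hge ▸ he)
    obtain ⟨w', hstep, hw'⟩ := exists_swap_step hw hge hg hwe k hegr
    have hcard : (Finset.univ.filter fun j => (swapCell k g e hegr).1 j ≠ f₀.1 j) =
        (Finset.univ.filter fun j => g.1 j ≠ f₀.1 j).erase k := by
      ext j
      rw [Finset.mem_erase, Finset.mem_filter, Finset.mem_filter, swapCell_val]
      rcases eq_or_ne j k with rfl | hj
      · simp [he]
      · simp [hj]
    obtain ⟨w'', hpath, hw''⟩ := ih hstep.2.1 hw'
      (by rw [← grade_spec _ k, swapCell_val, Function.update_self]; exact he ▸ grade_spec f₀ k)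
      (by rw [hcard, Finset.card_erase_of_mem hk, hd, Nat.add_sub_cancel])
    exact ⟨w'', .head hstep hpath, hw''⟩

lemma reflTransGen_swapMoves (hr : 0 < r) {u : Fin r → Fin n → ℤ} {w w' : powIdx r n t φ → ℤ}
    (hw : w ∈ marginFiber φ u) (hw' : w' ∈ marginFiber φ u) :
    Relation.ReflTransGen (mstep (marginFiber φ u) swapMoves) w w' := by
  obtain ⟨N, hN⟩ : ∃ N, (∑ f, w f).toNat = N := ⟨_, rfl⟩
  induction N generalizing u w w' with
  | zero =>
    obtain rfl := eq_zero_of_sum_nonpos hw.1 (by omega)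
    obtain rfl := eq_zero_of_sum_nonpos hw'.1 (by simp [← sum_eq_of_mem_marginFiber hr hw hw'])
    exact .refl
  | succ N ih =>
    obtain ⟨f₀, hf₀⟩ := exists_pos_of_sum_pos (q := w) (by omega)
    have hu : ∀ k, 0 < u k (f₀.1 k) := fun k =>
      hw.2 k ▸ hf₀.trans_le (apply_le_pushforward _ hw.1 f₀)
    obtain ⟨g, hg, hw'g⟩ : ∃ g, g.1 ⟨0, hr⟩ = f₀.1 ⟨0, hr⟩ ∧ 0 < w' g :=
      exists_pos_of_pushforward_pos (cellProj ⟨0, hr⟩)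
      ((hw'.2 ⟨0, hr⟩).symm ▸ hu ⟨0, hr⟩)
    obtain ⟨w'', hpath, hw''⟩ := exists_reflTransGen_swapMoves_pos hu hw' hw'g
      (by rw [← grade_spec g ⟨0, hr⟩, hg, grade_spec f₀])
    have hpeeled := ih (sub_single_mem_marginFiber hw hf₀)
      (sub_single_mem_marginFiber (mem_of_reflTransGen_mstep hpath hw') hw'')
      (by rw [sum_sub_single]; omega)
    have hlift := reflTransGen_mstep_add (Pi.single f₀ 1)
      (fun y hy => add_single_mem_marginFiber hy) hpeeled
    rw [sub_add_cancel, sub_add_cancel] at hlift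
    exact hlift.trans (symm_of _ hpath)

end Swap

section Lift
variable {r n t : ℕ} {φ : Fin n → Fin t}

lemma level_eq_of_pushforward_cellProj_eq (hr : 0 < r) {W : powIdx r n t φ → ℤ}
    {ρ : Fin r → Fin n → ℤ} {q : Fin t → ℤ} (hW : ∀ k, pushforward (cellProj k) W = ρ k)
    (hq : ∀ k, pushforward φ (ρ k) = q) : level W = q := by
  rw [← pushforward_pushforward_cellProj W ⟨0, hr⟩, hW, hq]

lemma deg_sub_le_of_level_eq {P Q : powIdx r n t φ → ℤ} (hP : 0 ≤ P) (hQ : 0 ≤ Q)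
    {p g : Fin t → ℤ} {E : ℤ} (hPl : level P = p + g) (hQl : level Q = p) (hp : ∑ a, p a ≤ E) :
    deg (P - Q) ≤ E + l1 g := by
  refine (deg_sub_le hP hQ).trans ?_
  rw [sum_eq_sum_level, sum_eq_sum_level, hPl, hQl]
  have hg : ∑ a, g a ≤ l1 g := Finset.sum_le_sum fun a _ => le_abs_self (g a)
  have hg0 := l1_nonneg g
  simp only [Pi.add_apply, Finset.sum_add_distrib]
  exact max_le (by linarith) (by linarith)

/-- After degree-`2` swaps, `w` contains a coupling `Q` of level `p = min (level w) D`, padding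
the negative parts of the `m k`; replacing it by a coupling `P` of level `p + g` shifts every
factor margin by `m k` in one move, of degree at most `t * D + l1 g` whatever `r` is. -/
lemma exists_tables_sub_deg_le (hr : 0 < r) {D : ℤ} {w : powIdx r n t φ → ℤ}
    (hw : 0 ≤ w) {m : Fin r → Fin n → ℤ} {g : Fin t → ℤ} (hm : ∀ k, pushforward φ (m k) = g)
    (hmD : ∀ k, l1 (m k) ≤ D) (hwm : ∀ k, 0 ≤ pushforward (cellProj k) w + m k) :
    ∃ w₁ w₂, w₁ ∈ marginFiber φ (fun k => pushforward (cellProj k) w) ∧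
      w₂ ∈ marginFiber φ (fun k => pushforward (cellProj k) w + m k) ∧
      deg (w₂ - w₁) ≤ t * D + l1 g := by
  set u := fun k => pushforward (cellProj k) w
  set p : Fin t → ℤ := fun a => min (level w a) D
  have hneg : ∀ k, neg (m k) ≤ u k := fun k => neg_le_iff.2 ⟨pushforward_nonneg _ hw, hwm k⟩
  have hnegp : ∀ k, pushforward φ (neg (m k)) ≤ p := fun k a =>
    le_min (pushforward_pushforward_cellProj w k ▸ pushforward_mono φ (hneg k) a)
      ((pushforward_le_sum φ (neg_nonneg _) a).trans ((sum_neg_le_l1 _).trans (hmD k)))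
  choose y hny hyu hyp using fun k => exists_between_pushforward_eq φ (hneg k) (hnegp k)
    (pushforward_pushforward_cellProj w k ▸ fun a => min_le_left _ _)
  have hym : ∀ k, pushforward φ (y k + m k) = p + g := fun k => by
    rw [pushforward_add, hyp k, hm k]
  obtain ⟨Q, hQ, hQm⟩ := exists_coupling hr (fun k => (neg_nonneg _).trans (hny k)) hyp
  obtain ⟨P, hP, hPm⟩ := exists_coupling hr (fun k => (neg_le_iff.1 (hny k)).2) hym
  obtain ⟨R, hR, hRm⟩ := exists_coupling hr (ρ := fun k => u k - y k) (q := level w - p)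
    (fun k => sub_nonneg.2 (hyu k))
    (fun k => by rw [pushforward_sub, hyp k, pushforward_pushforward_cellProj])
  refine ⟨R + Q, R + P, ⟨add_nonneg hR hQ, fun k => ?_⟩, ⟨add_nonneg hR hP, fun k => ?_⟩, ?_⟩
  · rw [pushforward_add, hRm k, hQm k, sub_add_cancel]
  · rw [pushforward_add, hRm k, hPm k, ← add_assoc, sub_add_cancel]
  · rw [add_sub_add_left_eq_sub]
    exact deg_sub_le_of_level_eq hP hQ (level_eq_of_pushforward_cellProj_eq hr hPm hym)
      (level_eq_of_pushforward_cellProj_eq hr hQm hyp)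
      (by simpa using Finset.sum_le_sum fun a (_ : a ∈ Finset.univ) => min_le_right (level w a) D)

end Lift

def fiber {h n t : ℕ} (B : Matrix (Fin h) (Fin n) ℤ) (φ : Fin n → Fin t) (r : ℕ)
    (c : Fin r × Fin h → ℤ) : Set (powIdx r n t φ → ℤ) :=
  {w | 0 ≤ w ∧ (powMat B φ r).mulVec w = c}

def boundedMoves {h n t : ℕ} (B : Matrix (Fin h) (Fin n) ℤ) (φ : Fin n → Fin t) (r : ℕ)
    (C : ℤ) : Set (powIdx r n t φ → ℤ) :=
  {v | (powMat B φ r).mulVec v = 0 ∧ deg v ≤ C}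

def kerLevel {h n t : ℕ} (B : Matrix (Fin h) (Fin n) ℤ) (φ : Fin n → Fin t) (g : Fin t → ℤ) :
    Set (Fin n → ℤ) :=
  {m | B.mulVec m = 0 ∧ pushforward φ m = g ∧ m ≠ 0}

section Connectivity
variable {h n t r : ℕ} {B : Matrix (Fin h) (Fin n) ℤ} {φ : Fin n → Fin t}

lemma swapMoves_subset_boundedMoves {C : ℤ} (hC : 2 ≤ C) :
    (swapMoves : Set (powIdx r n t φ → ℤ)) ⊆ boundedMoves B φ r C := fun v hv =>
  ⟨powMat_mulVec_eq_iff.2 fun k => by rw [hv.1 k, Matrix.mulVec_zero]; rfl, hv.2.trans hC⟩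

lemma marginFiber_subset_fiber {c : Fin r × Fin h → ℤ} {u : Fin r → Fin n → ℤ}
    (hu : ∀ k, B.mulVec (u k) = fun j => c (k, j)) : marginFiber φ u ⊆ fiber B φ r c :=
  fun _ hw => ⟨hw.1, powMat_mulVec_eq_iff.2 fun k => hw.2 k ▸ hu k⟩

lemma exists_reflTransGen_factor_shift (hr : 0 < r) {c : Fin r × Fin h → ℤ} {C D : ℤ}
    {g : Fin t → ℤ} (hC : 2 ≤ C) (hCD : t * D + l1 g ≤ C) {w : powIdx r n t φ → ℤ}
    (hw : w ∈ fiber B φ r c) {m : Fin r → Fin n → ℤ} (hmB : ∀ k, B.mulVec (m k) = 0)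
    (hm : ∀ k, pushforward φ (m k) = g) (hmD : ∀ k, l1 (m k) ≤ D)
    (hwm : ∀ k, 0 ≤ pushforward (cellProj k) w + m k) :
    ∃ w' ∈ fiber B φ r c, (∀ k, pushforward (cellProj k) w' = pushforward (cellProj k) w + m k) ∧
      Relation.ReflTransGen (mstep (fiber B φ r c) (boundedMoves B φ r C)) w w' := by
  obtain ⟨w₁, w₂, hw₁, hw₂, hdeg⟩ := exists_tables_sub_deg_le hr hw.1 hm hmD hwm
  have hc := powMat_mulVec_eq_iff.1 hw.2
  have hw₂F : w₂ ∈ fiber B φ r c :=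
    marginFiber_subset_fiber (fun k => by rw [Matrix.mulVec_add, hmB k, add_zero, hc k]) hw₂
  have hswap : Relation.ReflTransGen (mstep (fiber B φ r c) (boundedMoves B φ r C)) w w₁ :=
    Relation.ReflTransGen.mono
    (mstep_mono (marginFiber_subset_fiber hc) (swapMoves_subset_boundedMoves hC)) _ _
    (reflTransGen_swapMoves hr ⟨hw.1, fun k => rfl⟩ hw₁)
  have hmove : (powMat B φ r).mulVec (w₂ - w₁) = 0 := powMat_mulVec_eq_iff.2 fun k => by
    rw [pushforward_sub, hw₂.2 k, hw₁.2 k, add_sub_cancel_left, hmB k]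
    rfl
  exact ⟨w₂, hw₂F, hw₂.2,
    hswap.tail ⟨mem_of_reflTransGen_mstep hswap hw, hw₂F, .inl ⟨hmove, hdeg.trans hCD⟩⟩⟩

lemma exists_small_conformalLE {g : Fin t → ℤ} {D : ℤ} (hD : 0 ≤ D)
    (hg : ∀ d ∈ kerLevel B φ g, ∃ m ∈ kerLevel B φ g, ConformalLE m d ∧ l1 m ≤ D)
    {d : Fin n → ℤ} (hd : B.mulVec d = 0) (hdg : pushforward φ d = g) :
    ∃ m, B.mulVec m = 0 ∧ pushforward φ m = g ∧ ConformalLE m d ∧ l1 m ≤ D ∧ (d ≠ 0 → m ≠ 0) := by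
  by_cases hd0 : d = 0
  · subst hd0
    exact ⟨0, Matrix.mulVec_zero B, hdg, fun i => by simp, by simp [l1, hD], fun h => (h rfl).elim⟩
  · obtain ⟨m, ⟨hmB, hmg, hm0⟩, hmd, hmD⟩ := hg d ⟨hd, hdg, hd0⟩
    exact ⟨m, hmB, hmg, hmd, hmD, fun _ => hm0⟩

/-- Tables whose levels differ by an element of `L` are connected: peel off from every factor
margin difference a small conformal piece, lift these pieces to a single bounded move, and
repeat with levels now equal. -/
lemma reflTransGen_of_level_sub_mem (hr : 0 < r) {c : Fin r × Fin h → ℤ} {L : Set (Fin t → ℤ)}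
    {C D : ℤ} (hD : 0 ≤ D) (hC : 2 ≤ C) (hCD : (t + 1) * D ≤ C) (h0 : 0 ∈ L)
    (hL : ∀ g ∈ L, l1 g ≤ D ∧
      ∀ d ∈ kerLevel B φ g, ∃ m ∈ kerLevel B φ g, ConformalLE m d ∧ l1 m ≤ D)
    {w w' : powIdx r n t φ → ℤ} (hw : w ∈ fiber B φ r c) (hw' : w' ∈ fiber B φ r c)
    (hlev : level w' - level w ∈ L) :
    Relation.ReflTransGen (mstep (fiber B φ r c) (boundedMoves B φ r C)) w w' := by
  set d := fun (w : powIdx r n t φ → ℤ) k =>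
    pushforward (cellProj k) w' - pushforward (cellProj k) w
  obtain ⟨N, hN⟩ : ∃ N, (∑ k, l1 (d w k)).toNat = N := ⟨_, rfl⟩
  induction N using Nat.strong_induction_on generalizing w with
  | _ N ih =>
  have hc := powMat_mulVec_eq_iff.1 hw.2
  have hc' := powMat_mulVec_eq_iff.1 hw'.2
  by_cases hd : ∀ k, d w k = 0
  · refine Relation.ReflTransGen.mono
      (mstep_mono (marginFiber_subset_fiber hc) (swapMoves_subset_boundedMoves hC)) _ _
      (reflTransGen_swapMoves hr ⟨hw.1, fun k => rfl⟩ ⟨hw'.1, fun k => sub_eq_zero.1 (hd k)⟩)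
  obtain ⟨k₀, hk₀⟩ := not_forall.1 hd
  set g := level w' - level w with hg
  have hpart : ∀ k, ∃ m, B.mulVec m = 0 ∧ pushforward φ m = g ∧ ConformalLE m (d w k) ∧
      l1 m ≤ D ∧ (d w k ≠ 0 → m ≠ 0) := fun k =>
    exists_small_conformalLE hD (hL g hlev).2 (by rw [Matrix.mulVec_sub, hc k, hc' k, sub_self])
      (by rw [pushforward_sub, pushforward_pushforward_cellProj, pushforward_pushforward_cellProj])
  choose m hmB hmg hmd hmD hm0 using hpart
  obtain ⟨w₂, hw₂, hw₂m, hpath⟩ := exists_reflTransGen_factor_shift hr hC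
    (by linarith [(hL g hlev).1]) hw hmB hmg hmD
    (fun k => (hmd k).add_nonneg (pushforward_nonneg _ hw.1)
      (by simpa [d] using pushforward_nonneg _ hw'.1))
  have hdw₂ : ∀ k, d w₂ k = d w k - m k := fun k => by
    simp only [d, hw₂m k]
    abel
  have hlev₂ : level w' - level w₂ = 0 := by
    rw [← pushforward_pushforward_cellProj w₂ k₀, hw₂m k₀, pushforward_add,
      pushforward_pushforward_cellProj, hmg k₀, hg]
    abel
  refine hpath.trans (ih _ ?_ hw₂ (hlev₂ ▸ h0) rfl)
  have hlt : ∑ k, l1 (d w₂ k) < ∑ k, l1 (d w k) := by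
    simp only [hdw₂, (hmd _).l1_sub]
    exact Finset.sum_lt_sum (fun k _ => by linarith [l1_nonneg (m k)]) ⟨k₀, Finset.mem_univ _,
      by linarith [l1_pos (hm0 k₀ hk₀)]⟩
  have := Finset.sum_nonneg fun k (_ : k ∈ Finset.univ) => l1_nonneg (d w₂ k)
  omega

end Connectivity

section Levels
variable {h n t r : ℕ} {B : Matrix (Fin h) (Fin n) ℤ} {φ : Fin n → Fin t}

lemma eventually_kerLevel_bound (B : Matrix (Fin h) (Fin n) ℤ) (φ : Fin n → Fin t)
    {L : Set (Fin t → ℤ)} (hL : L.Finite) :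
    ∀ᶠ D in Filter.atTop, ∀ g ∈ L, l1 g ≤ D ∧
      ∀ d ∈ kerLevel B φ g, ∃ m ∈ kerLevel B φ g, ConformalLE m d ∧ l1 m ≤ D := by
  refine (Filter.eventually_all_finite hL).2 fun g _ => ?_
  obtain ⟨D₀, hD₀⟩ := exists_conformalLE_l1_le (kerLevel B φ g)
  refine Filter.eventually_atTop.2 ⟨max (l1 g) D₀, fun D hD => ⟨(le_max_left _ _).trans hD,
    fun d hd => ?_⟩⟩
  obtain ⟨m, hm, hmd, hmD⟩ := hD₀ d hd
  exact ⟨m, hm, hmd, hmD.trans ((le_max_right _ _).trans hD)⟩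

lemma mem_iInter_pushforward_image_iff (hr : 0 < r) {c : Fin r × Fin h → ℤ} {μ : Fin t → ℤ} :
    μ ∈ ⋂ k, pushforward φ '' {v | 0 ≤ v ∧ B.mulVec v = fun j => c (k, j)} ↔
      ∃ W ∈ fiber B φ r c, level W = μ := by
  simp only [Set.mem_iInter, Set.mem_image]
  constructor
  · intro hμ
    choose v hv hvμ using hμ
    obtain ⟨W, hW, hWv⟩ := exists_coupling hr (fun k => (hv k).1) hvμ
    exact ⟨W, marginFiber_subset_fiber (fun k => (hv k).2) ⟨hW, hWv⟩,
      by rw [← pushforward_pushforward_cellProj W ⟨0, hr⟩, hWv, hvμ]⟩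
  · rintro ⟨W, hW, rfl⟩ k
    exact ⟨_, ⟨pushforward_nonneg _ hW.1, powMat_mulVec_eq_iff.1 hW.2 k⟩,
      pushforward_pushforward_cellProj W k⟩

lemma reflTransGen_of_reflTransGen_level {F M : Set (powIdx r n t φ → ℤ)}
    {S G L : Set (Fin t → ℤ)} (hS : ∀ μ ∈ S, ∃ W ∈ F, level W = μ)
    (hGL : ∀ g ∈ G, g ∈ L ∧ -g ∈ L) (h0 : 0 ∈ L)
    (hL : ∀ w ∈ F, ∀ w' ∈ F, level w' - level w ∈ L → Relation.ReflTransGen (mstep F M) w w')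
    {w w' : powIdx r n t φ → ℤ} (hw : w ∈ F) (hw' : w' ∈ F)
    (hpath : Relation.ReflTransGen (mstep S G) (level w) (level w')) :
    Relation.ReflTransGen (mstep F M) w w' := by
  suffices ∀ μ, Relation.ReflTransGen (mstep S G) (level w) μ →
      ∀ w' ∈ F, level w' = μ → Relation.ReflTransGen (mstep F M) w w' from
    this _ hpath w' hw' rfl
  intro μ hμ
  induction hμ with
  | refl => exact fun w' hw' hlev => hL w hw w' hw' (by rwa [hlev, sub_self])
  | tail _ hstep ih =>
    intro w' hw' hlev
    obtain ⟨W, hW, hWlev⟩ := hS _ hstep.1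
    refine (ih W hW hWlev).trans (hL W hW w' hw' ?_)
    rw [hlev, hWlev]
    rcases hstep.2.2 with hg | hg
    · exact (hGL _ hg).1
    · simpa using (hGL _ hg).2

end Levels

theorem stmt_18_general (t h n : ℕ)
    (B : Matrix (Fin h) (Fin n) ℤ)
    (φ : Fin n → Fin t)
    (G : Set (Fin t → ℤ)) (hGfin : G.Finite)
    (hG : ∀ (r : ℕ), 0 < r → ∀ b : Fin r → (Fin h → ℤ),
      (∀ i, ∃ w : Fin n → ℤ, 0 ≤ w ∧ B.mulVec w = b i) →
      connects G (⋂ i, marg φ '' {w | 0 ≤ w ∧ B.mulVec w = b i})) :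
    ∃ C : ℤ, 0 < C ∧ ∀ r : ℕ, 0 < r →
      ∃ M : Set (powIdx r n t φ → ℤ),
        (∀ v ∈ M, (powMat B φ r).mulVec v = 0) ∧
        (∀ c : Fin r × Fin h → ℤ,
          connects M {w | 0 ≤ w ∧ (powMat B φ r).mulVec w = c}) ∧
        (∀ v ∈ M, deg v ≤ C) := by
  set L : Set (Fin t → ℤ) := insert 0 (G ∪ Neg.neg '' G)
  have hGL : ∀ g ∈ G, g ∈ L ∧ -g ∈ L := fun g hg => ⟨.inr (.inl hg), .inr (.inr ⟨g, hg, rfl⟩)⟩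
  obtain ⟨D, hD, hDL⟩ := ((Filter.eventually_ge_atTop 2).and
    (eventually_kerLevel_bound B φ ((hGfin.union (hGfin.image _)).insert 0))).exists
  simp only [marg_eq_pushforward] at hG
  refine ⟨(t + 1) * D, mul_pos (by positivity) (by omega), fun r hr =>
    ⟨boundedMoves B φ r ((t + 1) * D), fun v hv => hv.1, fun c w hw w' hw' => ?_, fun v hv => hv.2⟩⟩
  have hS := fun μ => mem_iInter_pushforward_image_iff (B := B) (φ := φ) (c := c) (μ := μ) hr
  refine reflTransGen_of_reflTransGen_level (fun μ hμ => (hS μ).1 hμ) hGL (Set.mem_insert _ _)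
    (fun w hw w' hw' => reflTransGen_of_level_sub_mem hr (by omega) (by nlinarith) le_rfl
      (Set.mem_insert _ _) hDL hw hw') hw hw' ?_
  exact hG r hr (fun k j => c (k, j))
    (fun k => ⟨_, pushforward_nonneg _ hw.1, powMat_mulVec_eq_iff.1 hw.2 k⟩)
    _ ((hS _).2 ⟨w, hw, rfl⟩) _ ((hS _).2 ⟨w', hw', rfl⟩)

/-- Theorem 6.2: if there is a finite PFI Markov basis `𝒢` connecting
all finite intersections of projected fibers of `ℬ`, then the Markov degrees of all
toric fiber powers `×_𝒜^r ℬ` are uniformly bounded. -/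
theorem stmt_18 (s t h n : ℕ)
    (A : Matrix (Fin s) (Fin t) ℤ) (B : Matrix (Fin h) (Fin n) ℤ)
    (φ : Fin n → Fin t) (hφ : Function.Surjective φ)
    (hgr : ∀ v, B.mulVec v = 0 → A.mulVec (marg φ v) = 0)
    (G : Set (Fin t → ℤ)) (hGfin : G.Finite)
    (hG : ∀ (r : ℕ), 0 < r → ∀ b : Fin r → (Fin h → ℤ),
      (∀ i, ∃ w : Fin n → ℤ, 0 ≤ w ∧ B.mulVec w = b i) →
      connects G (⋂ i, marg φ '' {w | 0 ≤ w ∧ B.mulVec w = b i})) :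
    ∃ C : ℤ, 0 < C ∧ ∀ r : ℕ, 0 < r →
      ∃ M : Set (powIdx r n t φ → ℤ),
        (∀ v ∈ M, (powMat B φ r).mulVec v = 0) ∧
        (∀ c : Fin r × Fin h → ℤ,
          connects M {w | 0 ≤ w ∧ (powMat B φ r).mulVec w = c}) ∧
        (∀ v ∈ M, deg v ≤ C) :=
  stmt_18_general t h n B φ G hGfin hG

end Stmt18
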